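/- For any propositional disjunctive logic program P, D-WFS*(Lft(P)) = D-WFS*(P), where Lft(P) is the least fixpoint transformation of P and D-WFS* is the weakest BD-semantics allowing all transformations in T*_WFS. -/
import Mathlib


open scoped Classical

namespace DLP

/-- A (propositional) rule `a₁ ∨ ⋯ ∨ aₙ ← b₁, …, bₘ, not c₁, …, not cₜ`,
with head atoms `head`, positive body atoms `bodyPos` and (default-)negated
body atoms `bodyNeg` (heads and bodies are sets of literals). -/
structure Rule (Atom : Type) where
  head : Finset Atom
  bodyPos : Finset Atom
  bodyNeg : Finset Atom

/-- A pure disjunction: a (positive) disjunction of atoms, or a (negative)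
disjunction of default-negated atoms. -/
inductive PDisj (Atom : Type) where
  | pos : Finset Atom → PDisj Atom
  | neg : Finset Atom → PDisj Atom

/-- The atoms occurring in a pure disjunction. -/
def PDisj.atomsOf {Atom : Type} : PDisj Atom → Finset Atom
  | .pos A => A
  | .neg A => A

/-- Sub-disjunction relation between pure disjunctions (same polarity). -/
def SubDisj {Atom : Type} : PDisj Atom → PDisj Atom → Prop
  | .pos A, .pos B => A ⊆ B
  | .neg A, .neg B => A ⊆ B
  | .pos _, .neg _ => False
  | .neg _, .pos _ => False

/-- A disjunctive logic program: a set of rules (over a finite atom alphabet,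
so every program is finite). -/
abbrev Program (Atom : Type) := Set (Rule Atom)

variable {Atom : Type} [Fintype Atom] [DecidableEq Atom]

/-- Well-formedness: every rule head is nonempty (n > 0). -/
def IsProgram (P : Program Atom) : Prop := ∀ r ∈ P, r.head.Nonempty

/-- The atoms occurring in rule heads of `P`. -/
def heads (P : Program Atom) : Set Atom := {a | ∃ r ∈ P, a ∈ r.head}

/-- Closure of a set of pure disjunctions under super-disjunctions
(model states are assumed closed under implication of pure disjunctions). -/
def stClosure (S : Set (PDisj Atom)) : Set (PDisj Atom) := {d' | ∃ d ∈ S, SubDisj d d'}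

/-- A model state: a set of (nonempty) pure disjunctions closed under
super-disjunctions. -/
def IsModelState (S : Set (PDisj Atom)) : Prop :=
  (∀ d ∈ S, (PDisj.atomsOf d).Nonempty) ∧ ∀ d ∈ S, ∀ d', SubDisj d d' → d' ∈ S

/-- Consistency of a model state. -/
def ConsistentState (S : Set (PDisj Atom)) : Prop :=
  (¬ ∃ A : Finset Atom, A.Nonempty ∧ PDisj.pos A ∈ S ∧ ∀ a ∈ A, PDisj.neg {a} ∈ S) ∧
  (¬ ∃ A : Finset Atom, A.Nonempty ∧ PDisj.neg A ∈ S ∧ ∀ a ∈ A, PDisj.pos {a} ∈ S)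

/-! ### Classical inference for (positive) programs -/

/-- An interpretation `I` satisfies a rule (read classically). -/
def SatisfiesRule (I : Set Atom) (r : Rule Atom) : Prop :=
  ((↑r.bodyPos : Set Atom) ⊆ I ∧ ∀ c ∈ r.bodyNeg, c ∉ I) → ∃ a ∈ r.head, a ∈ I

/-- Classical propositional entailment of a positive disjunction from a program. -/
def Entails (P : Program Atom) (A : Finset Atom) : Prop :=
  ∀ I : Set Atom, (∀ r ∈ P, SatisfiesRule I r) → ∃ a ∈ A, a ∈ I

/-- The least model state of a positive program: all entailed positive disjunctions. -/
def msState (P : Program Atom) : Set (Finset Atom) := {A | A.Nonempty ∧ Entails P A}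

/-- Canonical form: the minimal disjunctions of `S`. -/
def canonical (S : Set (Finset Atom)) : Set (Finset Atom) := {A | A ∈ S ∧ ¬ ∃ A' ∈ S, A' ⊂ A}

/-! ### Argumentation: hypotheses, support, attack, WFDS -/

/-- A hypothesis: a set of (nonempty) negative disjunctions, each represented
by its finite set of atoms. -/
def IsHyp (Δ : Set (Finset Atom)) : Prop := ∀ D ∈ Δ, D.Nonempty

/-- The reduct `P⁺_Δ` of `P` with respect to a hypothesis `Δ`. -/
def reduct (P : Program Atom) (Δ : Set (Finset Atom)) : Program Atom :=
  {r' | ∃ r ∈ P, (∀ c ∈ r.bodyNeg, ({c} : Finset Atom) ∈ Δ) ∧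
    r' = ⟨r.head, r.bodyPos, ∅⟩}

/-- `Δ ⊢_P A`: `Δ` is a supporting hypothesis for the positive disjunction `A`. -/
def Supports (P : Program Atom) (Δ : Set (Finset Atom)) (A : Finset Atom) : Prop :=
  ∃ B : Finset Atom, (∀ b ∈ B, ({b} : Finset Atom) ∈ Δ) ∧
    A ∪ B ∈ canonical (msState (reduct P Δ))

/-- Attack relation, parameterized by a support relation `sup`. -/
def AttacksWith (sup : Set (Finset Atom) → Finset Atom → Prop)
    (Δ Δ' : Set (Finset Atom)) : Prop :=
  (∃ β ∈ Δ', β.Nonempty ∧ ∀ b ∈ β, sup Δ {b}) ∨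
  (∃ B : Finset Atom, B.Nonempty ∧ (∀ b ∈ B, ({b} : Finset Atom) ∈ Δ') ∧ sup Δ B)

/-- The assumption `not a` is admissible with respect to `Δ`. -/
def AdmissibleWith (sup : Set (Finset Atom) → Finset Atom → Prop)
    (Δ : Set (Finset Atom)) (a : Atom) : Prop :=
  ∀ Δ' : Set (Finset Atom), IsHyp Δ' →
    AttacksWith sup Δ' {({a} : Finset Atom)} → AttacksWith sup Δ Δ'

/-- The operator `A_P`. -/
def AOpWith (sup : Set (Finset Atom) → Finset Atom → Prop)
    (Δ : Set (Finset Atom)) : Set (Finset Atom) :=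
  {D | D.Nonempty ∧ ∃ a ∈ D, AdmissibleWith sup Δ a}

/-- The well-founded disjunctive hypothesis: least fixpoint of `A_P`
(obtained by iteration from the empty hypothesis). -/
def WFDHWith (sup : Set (Finset Atom) → Finset Atom → Prop) : Set (Finset Atom) :=
  ⋃ k : ℕ, (AOpWith sup)^[k] ∅

/-- The induced well-founded model state `WFDH ∪ cons(WFDH)`
(closed under super-disjunctions). -/
def WFDSWith (sup : Set (Finset Atom) → Finset Atom → Prop) : Set (PDisj Atom) :=
  stClosure ({d | ∃ D ∈ WFDHWith sup, d = PDisj.neg D} ∪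
    {d | ∃ A : Finset Atom, A.Nonempty ∧ sup (WFDHWith sup) A ∧ d = PDisj.pos A})

/-- The attack relation `⇝_P` of `P`. -/
def Attacks (P : Program Atom) : Set (Finset Atom) → Set (Finset Atom) → Prop :=
  AttacksWith (Supports P)

/-- `WFDH(P)`. -/
def WFDH (P : Program Atom) : Set (Finset Atom) := WFDHWith (Supports P)

/-- `WFDS(P)`, the argumentation-based well-founded semantics. -/
def WFDS (P : Program Atom) : Set (PDisj Atom) := WFDSWith (Supports P)

/-! ### The hyperresolution operator `T^S` and the alternative semantics WFDS' -/

/-- The immediate consequence operator `T_Q^S` of a positive program `Q`. -/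
def TS (Q : Program Atom) (J : Set (Finset Atom)) : Set (Finset Atom) :=
  {A | ∃ r ∈ Q, ∃ f : Atom → Finset Atom,
    (∀ b ∈ r.bodyPos, insert b (f b) ∈ J) ∧ A = r.head ∪ r.bodyPos.biUnion f}

/-- `T_Q^S ↑ ω`. -/
def TSomega (Q : Program Atom) : Set (Finset Atom) := ⋃ k : ℕ, (TS Q)^[k] ∅

/-- `Δ ⊢'_P A`: support via the fixpoint of the hyperresolution operator. -/
def Supports' (P : Program Atom) (Δ : Set (Finset Atom)) (A : Finset Atom) : Prop :=
  ∃ B : Finset Atom, (∀ b ∈ B, ({b} : Finset Atom) ∈ Δ) ∧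
    A ∪ B ∈ TSomega (reduct P Δ)

/-- `WFDS'(P)`: as `WFDS(P)` but with `⊢_P` replaced by `⊢'_P` throughout. -/
def WFDS' (P : Program Atom) : Set (PDisj Atom) := WFDSWith (Supports' P)

/-! ### Program transformations -/

/-- `r'` is an implication of `r`. -/
def Implication (r' r : Rule Atom) : Prop :=
  r.head ⊆ r'.head ∧ r.bodyPos ⊆ r'.bodyPos ∧ r.bodyNeg ⊆ r'.bodyNeg ∧
    (r.head ⊂ r'.head ∨ r.bodyPos ⊂ r'.bodyPos ∨ r.bodyNeg ⊂ r'.bodyNeg)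

/-- `r'` is an s-implication of `r`: `r' ≠ r` and either `r'` is an implication of `r`,
or `r` can be obtained from `r'` by changing some negative body literals of `r'`
into head atoms and possibly removing some body literals. -/
def SImplication (r' r : Rule Atom) : Prop :=
  r' ≠ r ∧ (Implication r' r ∨
    ∃ V ⊆ r'.bodyNeg, r.head = r'.head ∪ V ∧ r.bodyPos ⊆ r'.bodyPos ∧
      r.bodyNeg ⊆ r'.bodyNeg \ V)

/-- Unfolding. -/
def Unfolding (P1 P2 : Program Atom) : Prop :=
  ∃ r ∈ P1, ∃ b ∈ r.bodyPos,
    P2 = (P1 \ {r}) ∪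
      {r'' | ∃ r' ∈ P1, b ∈ r'.head ∧
        r'' = ⟨r.head ∪ r'.head.erase b, r.bodyPos.erase b ∪ r'.bodyPos,
               r.bodyNeg ∪ r'.bodyNeg⟩}

/-- Elimination of tautologies. -/
def ElimTaut (P1 P2 : Program Atom) : Prop :=
  ∃ r ∈ P1, (r.head ∩ r.bodyPos).Nonempty ∧ P2 = P1 \ {r}

/-- Elimination of s-implications. -/
def ElimSImpl (P1 P2 : Program Atom) : Prop :=
  ∃ r' ∈ P1, (∃ r ∈ P1, SImplication r' r) ∧ P2 = P1 \ {r'}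

/-- Elimination of nonminimal rules. -/
def ElimNonmin (P1 P2 : Program Atom) : Prop :=
  ∃ r' ∈ P1, (∃ r ∈ P1, r' ≠ r ∧ Implication r' r) ∧ P2 = P1 \ {r'}

/-- Positive reduction. -/
def PosRed (P1 P2 : Program Atom) : Prop :=
  ∃ r ∈ P1, ∃ c ∈ r.bodyNeg, c ∉ heads P1 ∧
    P2 = (P1 \ {r}) ∪ {(⟨r.head, r.bodyPos, r.bodyNeg.erase c⟩ : Rule Atom)}

/-- Negative reduction. -/
def NegRed (P1 P2 : Program Atom) : Prop :=
  ∃ r ∈ P1, (∃ r' ∈ P1, r'.bodyPos = ∅ ∧ r'.bodyNeg = ∅ ∧ r'.head ⊆ r.bodyNeg) ∧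
    P2 = P1 \ {r}

/-! ### BD-semantics and the transformation-based semantics -/

/-- An (abstract) BD-semantics. -/
structure BDSemantics (Atom : Type) [Fintype Atom] [DecidableEq Atom] where
  sem : Program Atom → Set (PDisj Atom)
  nonempty_mem : ∀ P : Program Atom, IsProgram P → ∀ d ∈ sem P, (PDisj.atomsOf d).Nonempty
  closed : ∀ P : Program Atom, IsProgram P → ∀ d ∈ sem P, ∀ d', SubDisj d d' → d' ∈ sem P
  fact_mem : ∀ P : Program Atom, IsProgram P → ∀ r ∈ P, r.bodyPos = ∅ → r.bodyNeg = ∅ →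
    PDisj.pos r.head ∈ sem P
  neg_mem : ∀ P : Program Atom, IsProgram P → ∀ a : Atom, a ∉ heads P →
    PDisj.neg {a} ∈ sem P

/-- A BD-semantics `S` allows (is invariant under) a program transformation `T`. -/
def Allows (S : BDSemantics Atom) (T : Program Atom → Program Atom → Prop) : Prop :=
  ∀ P1 P2 : Program Atom, IsProgram P1 → IsProgram P2 → T P1 P2 → S.sem P1 = S.sem P2

/-- `S` allows all program transformations in `T*_WFS`. -/
def AllowsStar (S : BDSemantics Atom) : Prop :=
  Allows S Unfolding ∧ Allows S ElimTaut ∧ Allows S ElimSImpl ∧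
    Allows S PosRed ∧ Allows S NegRed

/-- `S` allows all program transformations in `T_WFS`. -/
def AllowsWFSset (S : BDSemantics Atom) : Prop :=
  Allows S Unfolding ∧ Allows S ElimTaut ∧ Allows S ElimNonmin ∧
    Allows S PosRed ∧ Allows S NegRed

/-- `D-WFS*`: the weakest BD-semantics allowing all transformations in `T*_WFS`. -/
def DWFSstar (P : Program Atom) : Set (PDisj Atom) :=
  ⋂ S ∈ {S : BDSemantics Atom | AllowsStar S}, S.sem P

/-- `D-WFS`: the weakest BD-semantics allowing all transformations in `T_WFS`. -/
def DWFS (P : Program Atom) : Set (PDisj Atom) :=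
  ⋂ S ∈ {S : BDSemantics Atom | AllowsWFSset S}, S.sem P

/-! ### The least fixpoint transformation and the strong residual program -/

/-- The generalized consequence operator `T_P^G` on sets of conditional facts. -/
def TG (P : Program Atom) (J : Set (Rule Atom)) : Set (Rule Atom) :=
  {C | ∃ r ∈ P, ∃ hf : Atom → Finset Atom, ∃ bf : Atom → Finset Atom,
    (∀ b ∈ r.bodyPos, (⟨insert b (hf b), ∅, bf b⟩ : Rule Atom) ∈ J) ∧
    C = ⟨r.head ∪ r.bodyPos.biUnion hf, ∅, r.bodyNeg ∪ r.bodyPos.biUnion bf⟩}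

/-- The least fixpoint transformation `Lft(P) = T_P^G ↑ ω`, a negative program. -/
def Lft (P : Program Atom) : Program Atom := ⋃ k : ℕ, (TG P)^[k] ∅

/-- The strong reduction operator `R*` on negative programs. -/
noncomputable def Rstar (N : Program Atom) : Program Atom :=
  {r' | ∃ r ∈ N, (¬ ∃ r'' ∈ N, SImplication r r'') ∧
    r' = ⟨r.head, r.bodyPos, r.bodyNeg.filter (fun c => c ∈ heads N)⟩}

/-- The strong residual program `res*(P)`: the fixpoint reached by iterating `R*`
starting from `Lft(P)`. -/
noncomputable def resStar (P : Program Atom) : Program Atom :=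
  if h : ∃ k : ℕ, Rstar ((Rstar (Atom := Atom))^[k] (Lft P)) = (Rstar (Atom := Atom))^[k] (Lft P)
  then (Rstar (Atom := Atom))^[Nat.find h] (Lft P)
  else ∅

/-! ### Unfounded sets -/

/-- `body(r)` is true with respect to the model state `S`. -/
def BodyTrue (S : Set (PDisj Atom)) (r : Rule Atom) : Prop :=
  (∀ b ∈ r.bodyPos, PDisj.pos {b} ∈ S) ∧ (∀ c ∈ r.bodyNeg, PDisj.neg {c} ∈ S)

/-- `body(r)` is false with respect to the model state `S`. -/
def BodyFalse (S : Set (PDisj Atom)) (r : Rule Atom) : Prop :=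
  (∃ b ∈ r.bodyPos, PDisj.neg {b} ∈ S) ∨ (∃ c ∈ r.bodyNeg, PDisj.pos {c} ∈ S) ∨
  (∃ A : Finset Atom, A.Nonempty ∧ A ⊆ r.bodyNeg ∧ PDisj.pos A ∈ S)

/-- `X` is an unfounded set for `P` with respect to the model state `S`. -/
def Unfounded (P : Program Atom) (S : Set (PDisj Atom)) (X : Set Atom) : Prop :=
  ∀ a ∈ X, ∀ r ∈ P, a ∈ r.head →
    BodyFalse S r ∨ (∃ x ∈ X, x ∈ r.bodyPos) ∨
    (BodyTrue S r → ∃ A : Finset Atom, A.Nonempty ∧ (↑A : Set Atom) ⊆ (↑r.head : Set Atom) \ X ∧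
      PDisj.pos A ∈ S)

/-- The candidate greatest unfounded set: the union of all unfounded sets
(it is the greatest unfounded set exactly when it is itself unfounded). -/
def UP (P : Program Atom) (S : Set (PDisj Atom)) : Set Atom := ⋃₀ {X | Unfounded P S X}

/-- The operator `T_P` on model states. -/
def TPop (P : Program Atom) (S : Set (PDisj Atom)) : Set (Finset Atom) :=
  {A | A.Nonempty ∧ ∃ r ∈ P, BodyTrue S r ∧ A ⊆ r.head ∧
    ∀ a ∈ r.head, a ∉ A → PDisj.neg {a} ∈ S}

/-- The operator `W_P(S) = T_P(S) ∪ not.U_P(S)`. -/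
def WP (P : Program Atom) (S : Set (PDisj Atom)) : Set (PDisj Atom) :=
  {d | ∃ A ∈ TPop P S, d = PDisj.pos A} ∪ {d | ∃ p ∈ UP P S, d = PDisj.neg ({p} : Finset Atom)}

/-- The sequence `W_0 = ∅`, `W_k = W_P(W_{k-1})`. -/
def Wseq (P : Program Atom) (k : ℕ) : Set (PDisj Atom) := (WP P)^[k] ∅

/-- `U-WFS(P)`: the least fixpoint of `W_P` (closed under super-disjunctions). -/
def UWFS (P : Program Atom) : Set (PDisj Atom) := stClosure (⋃ k : ℕ, Wseq P k)


/-! ### Auxiliary lemmas for Statement 7 -/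

section Aux7

variable {Atom : Type} [Fintype Atom] [DecidableEq Atom]

lemma ruleExt {r s : Rule Atom} (h1 : r.head = s.head) (h2 : r.bodyPos = s.bodyPos)
    (h3 : r.bodyNeg = s.bodyNeg) : r = s := by
  cases r; cases s; simp_all

instance : Finite (Rule Atom) :=
  Finite.of_injective (fun r => (r.head, r.bodyPos, r.bodyNeg))
    (by rintro ⟨a,b,c⟩ ⟨d,e,f⟩ h; simpa using h)

/-- Domination of one conditional fact by another. -/
def Dom (C' C : Rule Atom) : Prop :=
  C'.head ⊆ C.head ∧ C'.bodyPos ⊆ C.bodyPos ∧ C'.bodyNeg ⊆ C.bodyNeg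

lemma Dom.refl (C : Rule Atom) : Dom C C := ⟨subset_rfl, subset_rfl, subset_rfl⟩

lemma TG_mono_J {P : Program Atom} {J J' : Set (Rule Atom)} (h : J ⊆ J') :
    TG P J ⊆ TG P J' := by
  rintro C ⟨r, hr, hf, bf, hfacts, rfl⟩
  exact ⟨r, hr, hf, bf, fun b hb => h (hfacts b hb), rfl⟩

lemma TG_mono_P {P P' : Program Atom} {J : Set (Rule Atom)} (h : P ⊆ P') :
    TG P J ⊆ TG P' J := by
  rintro C ⟨r, hr, hf, bf, hfacts, rfl⟩
  exact ⟨r, h hr, hf, bf, hfacts, rfl⟩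

lemma iterTG_succ (P : Program Atom) (k : ℕ) :
    (TG P)^[k+1] (∅ : Set (Rule Atom)) = TG P ((TG P)^[k] ∅) :=
  Function.iterate_succ_apply' _ _ _

lemma iterTG_mono_step (P : Program Atom) (k : ℕ) :
    (TG P)^[k] (∅ : Set (Rule Atom)) ⊆ (TG P)^[k+1] ∅ := by
  induction k with
  | zero => simp
  | succ k ih =>
    rw [iterTG_succ, iterTG_succ]
    exact TG_mono_J ih

lemma iterTG_mono {P : Program Atom} {k m : ℕ} (h : k ≤ m) :
    (TG P)^[k] (∅ : Set (Rule Atom)) ⊆ (TG P)^[m] ∅ := by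
  induction h with
  | refl => exact subset_rfl
  | step _ ih => exact ih.trans (iterTG_mono_step _ _)

lemma mem_Lft {P : Program Atom} {C : Rule Atom} :
    C ∈ Lft P ↔ ∃ k, C ∈ (TG P)^[k] (∅ : Set (Rule Atom)) := by
  simp [Lft, Set.mem_iUnion]

lemma iter_subset_Lft {P : Program Atom} (k : ℕ) :
    (TG P)^[k] (∅ : Set (Rule Atom)) ⊆ Lft P :=
  fun C hC => mem_Lft.mpr ⟨k, hC⟩

lemma Lft_bodyPos {P : Program Atom} {C : Rule Atom} (h : C ∈ Lft P) : C.bodyPos = ∅ := by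
  obtain ⟨k, hk⟩ := mem_Lft.mp h
  cases k with
  | zero => exact absurd hk (by simp)
  | succ k =>
    rw [iterTG_succ] at hk
    obtain ⟨r, hr, hf, bf, hfacts, rfl⟩ := hk
    rfl

lemma Lft_isProgram {P : Program Atom} (hP : IsProgram P) : IsProgram (Lft P) := by
  intro C hC
  obtain ⟨k, hk⟩ := mem_Lft.mp hC
  cases k with
  | zero => exact absurd hk (by simp)
  | succ k =>
    rw [iterTG_succ] at hk
    obtain ⟨r, hr, hf, bf, hfacts, rfl⟩ := hk
    exact (hP r hr).mono Finset.subset_union_left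

lemma TG_Lft_subset (P : Program Atom) : TG P (Lft P) ⊆ Lft P := by
  rintro C ⟨r, hr, hf, bf, hfacts, rfl⟩
  have h : ∀ b : Atom, ∃ k, b ∈ r.bodyPos →
      (⟨insert b (hf b), ∅, bf b⟩ : Rule Atom) ∈ (TG P)^[k] (∅ : Set (Rule Atom)) := by
    intro b
    by_cases hb : b ∈ r.bodyPos
    · obtain ⟨k, hk⟩ := mem_Lft.mp (hfacts b hb)
      exact ⟨k, fun _ => hk⟩
    · exact ⟨0, fun h => absurd h hb⟩
  choose kk hkk using h
  refine mem_Lft.mpr ⟨(r.bodyPos.sup kk) + 1, ?_⟩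
  rw [iterTG_succ]
  exact ⟨r, hr, hf, bf, fun b hb => iterTG_mono (Finset.le_sup hb) (hkk b hb), rfl⟩

lemma fire_Lft {P : Program Atom} {r : Rule Atom} (hr : r ∈ P) (hf bf : Atom → Finset Atom)
    (hfacts : ∀ b ∈ r.bodyPos, (⟨insert b (hf b), ∅, bf b⟩ : Rule Atom) ∈ Lft P) :
    (⟨r.head ∪ r.bodyPos.biUnion hf, ∅, r.bodyNeg ∪ r.bodyPos.biUnion bf⟩ : Rule Atom) ∈ Lft P :=
  TG_Lft_subset P ⟨r, hr, hf, bf, hfacts, rfl⟩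

lemma iterTG_mono_P {P P' : Program Atom} (h : P ⊆ P') (k : ℕ) :
    (TG P)^[k] (∅ : Set (Rule Atom)) ⊆ (TG P')^[k] ∅ := by
  induction k with
  | zero => exact subset_rfl
  | succ k ih =>
    rw [iterTG_succ, iterTG_succ]
    exact (TG_mono_J ih).trans (TG_mono_P h)

lemma Lft_mono {P P' : Program Atom} (h : P ⊆ P') : Lft P ⊆ Lft P' := by
  intro C hC
  obtain ⟨k, hk⟩ := mem_Lft.mp hC
  exact mem_Lft.mpr ⟨k, iterTG_mono_P h k hk⟩

lemma slot_eq {G : Rule Atom} {x : Atom} (h0 : G.bodyPos = ∅) (hx : x ∈ G.head) :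
    (⟨insert x (G.head.erase x), ∅, G.bodyNeg⟩ : Rule Atom) = G :=
  ruleExt (Finset.insert_erase hx) h0.symm rfl

lemma Lft_of_neg {P : Program Atom} (h : ∀ r ∈ P, r.bodyPos = ∅) : Lft P = P := by
  apply Set.Subset.antisymm
  · intro C hC
    obtain ⟨k, hk⟩ := mem_Lft.mp hC
    cases k with
    | zero => exact absurd hk (by simp)
    | succ k =>
      rw [iterTG_succ] at hk
      obtain ⟨r, hr, hf, bf, hfacts, rfl⟩ := hk
      have hb := h r hr
      have : (⟨r.head ∪ r.bodyPos.biUnion hf, ∅, r.bodyNeg ∪ r.bodyPos.biUnion bf⟩ : Rule Atom) = r := by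
        refine ruleExt ?_ hb.symm ?_ <;> simp [hb]
      rw [this]; exact hr
  · intro r hr
    refine mem_Lft.mpr ⟨1, ?_⟩
    rw [show (1:ℕ) = 0 + 1 from rfl, iterTG_succ]
    refine ⟨r, hr, fun _ => ∅, fun _ => ∅, ?_, ?_⟩
    · intro b hb; rw [h r hr] at hb; exact absurd hb (Finset.notMem_empty b)
    · refine (ruleExt ?_ (h r hr).symm ?_).symm <;> simp [h r hr]

/-- Simulate firing a rule present in `Q'` with dominated slot facts. -/
lemma sim_rule {Q' : Program Atom} {ρ : Rule Atom} (hρ : ρ ∈ Q') (hf bf : Atom → Finset Atom)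
    (h : ∀ b ∈ ρ.bodyPos, ∃ G ∈ Lft Q', Dom G ⟨insert b (hf b), ∅, bf b⟩) :
    ∃ C' ∈ Lft Q',
      Dom C' ⟨ρ.head ∪ ρ.bodyPos.biUnion hf, ∅, ρ.bodyNeg ∪ ρ.bodyPos.biUnion bf⟩ := by
  classical
  have h' : ∀ b : Atom, ∃ G : Rule Atom, b ∈ ρ.bodyPos →
      G ∈ Lft Q' ∧ Dom G ⟨insert b (hf b), ∅, bf b⟩ := by
    intro b
    by_cases hb : b ∈ ρ.bodyPos
    · obtain ⟨G, hG1, hG2⟩ := h b hb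
      exact ⟨G, fun _ => ⟨hG1, hG2⟩⟩
    · exact ⟨⟨∅, ∅, ∅⟩, fun hb' => absurd hb' hb⟩
  choose G hG using h'
  by_cases hex : ∃ b ∈ ρ.bodyPos, b ∉ (G b).head
  · obtain ⟨b, hb, hbh⟩ := hex
    obtain ⟨hG1, hGd⟩ := hG b hb
    refine ⟨G b, hG1, ?_, ?_, ?_⟩
    · intro x hx
      have hx' : x ∈ insert b (hf b) := hGd.1 hx
      have hxb : x ≠ b := fun he => hbh (he ▸ hx)
      have : x ∈ hf b := by
        rcases Finset.mem_insert.mp hx' with h1 | h1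
        · exact absurd h1 hxb
        · exact h1
      exact Finset.mem_union_right _ (Finset.mem_biUnion.mpr ⟨b, hb, this⟩)
    · exact hGd.2.1
    · exact fun x hx => Finset.mem_union_right _ (Finset.mem_biUnion.mpr ⟨b, hb, hGd.2.2 hx⟩)
  · push_neg at hex
    have hpos : ∀ b, b ∈ ρ.bodyPos → (G b).bodyPos = ∅ :=
      fun b hb => Lft_bodyPos (hG b hb).1
    have hfacts : ∀ b ∈ ρ.bodyPos,
        (⟨insert b ((G b).head.erase b), ∅, (G b).bodyNeg⟩ : Rule Atom) ∈ Lft Q' := by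
      intro b hb
      rw [slot_eq (hpos b hb) (hex b hb)]
      exact (hG b hb).1
    refine ⟨_, fire_Lft hρ _ _ hfacts, ?_, ?_, ?_⟩
    · intro x hx
      rcases Finset.mem_union.mp hx with h1 | h1
      · exact Finset.mem_union_left _ h1
      · obtain ⟨b, hb, hxb⟩ := Finset.mem_biUnion.mp h1
        have hxb' : x ∈ insert b (hf b) := (hG b hb).2.1 (Finset.mem_of_mem_erase hxb)
        have : x ∈ hf b := by
          rcases Finset.mem_insert.mp hxb' with h2 | h2
          · exact absurd h2 (Finset.ne_of_mem_erase hxb)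
          · exact h2
        exact Finset.mem_union_right _ (Finset.mem_biUnion.mpr ⟨b, hb, this⟩)
    · exact subset_rfl
    · intro x hx
      rcases Finset.mem_union.mp hx with h1 | h1
      · exact Finset.mem_union_left _ h1
      · obtain ⟨b, hb, hxb⟩ := Finset.mem_biUnion.mp h1
        exact Finset.mem_union_right _ (Finset.mem_biUnion.mpr ⟨b, hb, (hG b hb).2.2.2 hxb⟩)

/-- Delete dominated rules one by one via elimination of s-implications. -/
lemma elim_chain {S : BDSemantics Atom} (hS : Allows S ElimSImpl) :
    ∀ n (M M' : Program Atom), (M \ M').ncard = n → IsProgram M → M' ⊆ M →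
      (∀ C ∈ M, ∃ C' ∈ M', Dom C' C) → S.sem M = S.sem M' := by
  intro n
  induction n using Nat.strong_induction_on with
  | _ n IHn =>
    intro M M' hcard hM hsub hdom
    by_cases hMM : M ⊆ M'
    · rw [Set.Subset.antisymm hMM hsub]
    · obtain ⟨C, hCM, hCM'⟩ := Set.not_subset.mp hMM
      obtain ⟨C', hC'M', hD⟩ := hdom C hCM
      have hne : C ≠ C' := fun h => hCM' (h ▸ hC'M')
      have himp : Implication C C' := by
        refine ⟨hD.1, hD.2.1, hD.2.2, ?_⟩
        rcases eq_or_ne C'.head C.head with h1 | h1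
        · rcases eq_or_ne C'.bodyPos C.bodyPos with h2 | h2
          · rcases eq_or_ne C'.bodyNeg C.bodyNeg with h3 | h3
            · exact absurd (ruleExt h1 h2 h3).symm hne
            · exact Or.inr (Or.inr (Finset.ssubset_iff_subset_ne.mpr ⟨hD.2.2, h3⟩))
          · exact Or.inr (Or.inl (Finset.ssubset_iff_subset_ne.mpr ⟨hD.2.1, h2⟩))
        · exact Or.inl (Finset.ssubset_iff_subset_ne.mpr ⟨hD.1, h1⟩)
      have htrans : ElimSImpl M (M \ {C}) :=
        ⟨C, hCM, ⟨C', hsub hC'M', hne, Or.inl himp⟩, rfl⟩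
      have hM2 : IsProgram (M \ {C}) := fun r hr => hM r hr.1
      rw [hS M (M \ {C}) hM hM2 htrans]
      have hlt : ((M \ {C}) \ M').ncard < n := by
        have hset : (M \ {C}) \ M' = (M \ M') \ {C} := by
          ext x; simp only [Set.mem_diff, Set.mem_singleton_iff]; tauto
        rw [hset, ← hcard]
        exact Set.ncard_diff_singleton_lt_of_mem ⟨hCM, hCM'⟩ (Set.toFinite _)
      exact IHn _ hlt (M \ {C}) M' rfl hM2
        (fun x hx => ⟨hsub hx, fun h => hCM' (h ▸ hx)⟩)
        (fun C'' hC'' => hdom C'' hC''.1)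

lemma sem_eq_of_mutual_dom {S : BDSemantics Atom} (hS : Allows S ElimSImpl)
    {M1 M2 : Program Atom} (h1 : IsProgram M1) (h2 : IsProgram M2)
    (d12 : ∀ C ∈ M1, ∃ C' ∈ M2, Dom C' C) (d21 : ∀ C ∈ M2, ∃ C' ∈ M1, Dom C' C) :
    S.sem M1 = S.sem M2 := by
  have hM : IsProgram (M1 ∪ M2) := by
    rintro r (hr | hr)
    · exact h1 r hr
    · exact h2 r hr
  have e1 : S.sem (M1 ∪ M2) = S.sem M1 :=
    elim_chain hS _ _ _ rfl hM Set.subset_union_left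
      (fun C hC => hC.elim (fun h => ⟨C, h, Dom.refl C⟩) (fun h => d21 C h))
  have e2 : S.sem (M1 ∪ M2) = S.sem M2 :=
    elim_chain hS _ _ _ rfl hM Set.subset_union_right
      (fun C hC => hC.elim (fun h => d12 C h) (fun h => ⟨C, h, Dom.refl C⟩))
  rw [← e1, e2]

/-- Facts derived using a tautology are dominated by facts of the reduced program. -/
lemma taut_dom {Q : Program Atom} {rt : Rule Atom} {b0 : Atom}
    (hb1 : b0 ∈ rt.head) (hb2 : b0 ∈ rt.bodyPos) :
    ∀ C ∈ Lft Q, ∃ C' ∈ Lft (Q \ {rt}), Dom C' C := by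
  have key : ∀ k, ∀ C ∈ (TG Q)^[k] (∅ : Set (Rule Atom)),
      ∃ C' ∈ Lft (Q \ {rt}), Dom C' C := by
    intro k
    induction k with
    | zero => simp
    | succ k IH =>
      rw [iterTG_succ]
      rintro C ⟨ρ, hρ, hf, bf, hfacts, rfl⟩
      by_cases hρr : ρ = rt
      · subst hρr
        obtain ⟨G, hG1, hGd⟩ := IH _ (hfacts b0 hb2)
        refine ⟨G, hG1, ?_, hGd.2.1, ?_⟩
        · intro x hx
          have hx' : x ∈ insert b0 (hf b0) := hGd.1 hx
          rcases Finset.mem_insert.mp hx' with h1 | h1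
          · exact Finset.mem_union_left _ (h1 ▸ hb1)
          · exact Finset.mem_union_right _ (Finset.mem_biUnion.mpr ⟨b0, hb2, h1⟩)
        · exact fun x hx =>
            Finset.mem_union_right _ (Finset.mem_biUnion.mpr ⟨b0, hb2, hGd.2.2 hx⟩)
      · exact sim_rule (show ρ ∈ Q \ {rt} from ⟨hρ, hρr⟩) hf bf
          (fun b hb => IH _ (hfacts b hb))
  intro C hC
  obtain ⟨k, hk⟩ := mem_Lft.mp hC
  exact key k C hk


/-- The result of unfolding rule `r` on body atom `b`. -/
def unfolded (Q1 : Program Atom) (r : Rule Atom) (b : Atom) : Program Atom :=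
  (Q1 \ {r}) ∪ {r'' | ∃ r' ∈ Q1, b ∈ r'.head ∧
    r'' = ⟨r.head ∪ r'.head.erase b, r.bodyPos.erase b ∪ r'.bodyPos,
           r.bodyNeg ∪ r'.bodyNeg⟩}

lemma unfolding_unfolded {Q1 : Program Atom} {r : Rule Atom} {b : Atom}
    (hr : r ∈ Q1) (hb : b ∈ r.bodyPos) : Unfolding Q1 (unfolded Q1 r b) :=
  ⟨r, hr, b, hb, rfl⟩

lemma unfolded_isProgram {Q1 : Program Atom} {r : Rule Atom} {b : Atom}
    (hQ1 : IsProgram Q1) (hr : r ∈ Q1) : IsProgram (unfolded Q1 r b) := by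
  rintro ρ (hρ | ⟨r', hr', hbr', rfl⟩)
  · exact hQ1 ρ hρ.1
  · exact (hQ1 r hr).mono Finset.subset_union_left

lemma unfold_pull {Q1 : Program Atom} {r : Rule Atom} {b : Atom}
    (hr : r ∈ Q1) (hb : b ∈ r.bodyPos)
    (Hnt : ∀ ρ ∈ Q1, ¬(b ∈ ρ.head ∧ b ∈ ρ.bodyPos)) :
    ∀ k, ∀ F ∈ (TG (unfolded Q1 r b))^[k] (∅ : Set (Rule Atom)), b ∈ F.head →
      ∀ hf bf : Atom → Finset Atom,
        (∀ b' ∈ r.bodyPos.erase b,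
          (⟨insert b' (hf b'), ∅, bf b'⟩ : Rule Atom) ∈ Lft (unfolded Q1 r b)) →
        ∃ G ∈ Lft (unfolded Q1 r b),
          G.head ⊆ r.head ∪ F.head.erase b ∪ (r.bodyPos.erase b).biUnion hf ∧
          G.bodyNeg ⊆ r.bodyNeg ∪ F.bodyNeg ∪ (r.bodyPos.erase b).biUnion bf := by
  classical
  have hbr : b ∉ r.head := fun h => Hnt r hr ⟨h, hb⟩
  intro k
  induction k with
  | zero => intro F hF; simp at hF
  | succ k IH =>
    rw [iterTG_succ]
    rintro F ⟨ρ₂, hρ₂, hf₂, bf₂, hfacts, rfl⟩ hbF hf bf hside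
    have hbF' : b ∈ ρ₂.head ∪ ρ₂.bodyPos.biUnion hf₂ := hbF
    show ∃ G ∈ Lft (unfolded Q1 r b),
      G.head ⊆ r.head ∪ (ρ₂.head ∪ ρ₂.bodyPos.biUnion hf₂).erase b ∪
        (r.bodyPos.erase b).biUnion hf ∧
      G.bodyNeg ⊆ r.bodyNeg ∪ (ρ₂.bodyNeg ∪ ρ₂.bodyPos.biUnion bf₂) ∪
        (r.bodyPos.erase b).biUnion bf
    have IH' : ∀ c : Atom, ∃ G : Rule Atom, c ∈ ρ₂.bodyPos → b ∈ insert c (hf₂ c) →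
        G ∈ Lft (unfolded Q1 r b) ∧
        G.head ⊆ r.head ∪ (insert c (hf₂ c)).erase b ∪ (r.bodyPos.erase b).biUnion hf ∧
        G.bodyNeg ⊆ r.bodyNeg ∪ bf₂ c ∪ (r.bodyPos.erase b).biUnion bf := by
      intro c
      by_cases h : c ∈ ρ₂.bodyPos ∧ b ∈ insert c (hf₂ c)
      · obtain ⟨G, hG, h1, h2⟩ := IH _ (hfacts c h.1) h.2 hf bf hside
        exact ⟨G, fun _ _ => ⟨hG, h1, h2⟩⟩
      · exact ⟨⟨∅, ∅, ∅⟩, fun h1 h2 => absurd ⟨h1, h2⟩ h⟩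
    choose G hG using IH'
    by_cases hex : ∃ c, c ∈ ρ₂.bodyPos ∧ b ∈ insert c (hf₂ c) ∧ c ∉ (G c).head
    · -- early exit: some bad slot resolves `b` without reproducing its atom
      obtain ⟨c, hc, hbc, hcG⟩ := hex
      obtain ⟨hGmem, hGh, hGn⟩ := hG c hc hbc
      refine ⟨G c, hGmem, ?_, ?_⟩
      · intro x hx
        rcases Finset.mem_union.mp (hGh hx) with h1 | h1
        · rcases Finset.mem_union.mp h1 with h2 | h2
          · exact Finset.mem_union_left _ (Finset.mem_union_left _ h2)
          · obtain ⟨hxb, hxi⟩ := Finset.mem_erase.mp h2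
            have hxc : x ≠ c := fun he => hcG (he ▸ hx)
            have hxf : x ∈ hf₂ c := by
              rcases Finset.mem_insert.mp hxi with h3 | h3
              · exact absurd h3 hxc
              · exact h3
            exact Finset.mem_union_left _ (Finset.mem_union_right _
              (Finset.mem_erase.mpr ⟨hxb, Finset.mem_union_right _
                (Finset.mem_biUnion.mpr ⟨c, hc, hxf⟩)⟩))
        · exact Finset.mem_union_right _ h1
      · intro x hx
        rcases Finset.mem_union.mp (hGn hx) with h1 | h1
        · rcases Finset.mem_union.mp h1 with h2 | h2
          · exact Finset.mem_union_left _ (Finset.mem_union_left _ h2)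
          · exact Finset.mem_union_left _ (Finset.mem_union_right _
              (Finset.mem_union_right _ (Finset.mem_biUnion.mpr ⟨c, hc, h2⟩)))
        · exact Finset.mem_union_right _ h1
    · push_neg at hex
      set hf₂' : Atom → Finset Atom :=
        fun c => if b ∈ insert c (hf₂ c) then (G c).head.erase c else hf₂ c with hhf₂'
      set bf₂' : Atom → Finset Atom :=
        fun c => if b ∈ insert c (hf₂ c) then (G c).bodyNeg else bf₂ c with hbf₂'
      have hslots : ∀ c ∈ ρ₂.bodyPos,
          (⟨insert c (hf₂' c), ∅, bf₂' c⟩ : Rule Atom) ∈ Lft (unfolded Q1 r b) := by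
        intro c hc
        by_cases hbad : b ∈ insert c (hf₂ c)
        · have h3 := hG c hc hbad
          simp only [hhf₂', hbf₂', if_pos hbad]
          rw [slot_eq (Lft_bodyPos h3.1) (hex c hc hbad)]
          exact h3.1
        · simp only [hhf₂', hbf₂', if_neg hbad]
          exact iter_subset_Lft k (hfacts c hc)
      have hslot_head : ∀ c ∈ ρ₂.bodyPos, hf₂' c ⊆
          r.head ∪ (ρ₂.head ∪ ρ₂.bodyPos.biUnion hf₂).erase b ∪
            (r.bodyPos.erase b).biUnion hf := by
        intro c hc x hx
        by_cases hbad : b ∈ insert c (hf₂ c)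
        · simp only [hhf₂', if_pos hbad] at hx
          have hxc := Finset.ne_of_mem_erase hx
          rcases Finset.mem_union.mp ((hG c hc hbad).2.1 (Finset.mem_of_mem_erase hx)) with h1 | h1
          · rcases Finset.mem_union.mp h1 with h2 | h2
            · exact Finset.mem_union_left _ (Finset.mem_union_left _ h2)
            · obtain ⟨hxb, hxi⟩ := Finset.mem_erase.mp h2
              have hxf : x ∈ hf₂ c := by
                rcases Finset.mem_insert.mp hxi with h3 | h3
                · exact absurd h3 hxc
                · exact h3
              exact Finset.mem_union_left _ (Finset.mem_union_right _
                (Finset.mem_erase.mpr ⟨hxb, Finset.mem_union_right _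
                  (Finset.mem_biUnion.mpr ⟨c, hc, hxf⟩)⟩))
          · exact Finset.mem_union_right _ h1
        · simp only [hhf₂', if_neg hbad] at hx
          have hxb : x ≠ b := fun he => hbad (he ▸ Finset.mem_insert_of_mem hx)
          exact Finset.mem_union_left _ (Finset.mem_union_right _
            (Finset.mem_erase.mpr ⟨hxb, Finset.mem_union_right _
              (Finset.mem_biUnion.mpr ⟨c, hc, hx⟩)⟩))
      have hslot_neg : ∀ c ∈ ρ₂.bodyPos, bf₂' c ⊆
          r.bodyNeg ∪ (ρ₂.bodyNeg ∪ ρ₂.bodyPos.biUnion bf₂) ∪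
            (r.bodyPos.erase b).biUnion bf := by
        intro c hc x hx
        by_cases hbad : b ∈ insert c (hf₂ c)
        · simp only [hbf₂', if_pos hbad] at hx
          rcases Finset.mem_union.mp ((hG c hc hbad).2.2 hx) with h1 | h1
          · rcases Finset.mem_union.mp h1 with h2 | h2
            · exact Finset.mem_union_left _ (Finset.mem_union_left _ h2)
            · exact Finset.mem_union_left _ (Finset.mem_union_right _
                (Finset.mem_union_right _ (Finset.mem_biUnion.mpr ⟨c, hc, h2⟩)))
          · exact Finset.mem_union_right _ h1
        · simp only [hbf₂', if_neg hbad] at hx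
          exact Finset.mem_union_left _ (Finset.mem_union_right _
            (Finset.mem_union_right _ (Finset.mem_biUnion.mpr ⟨c, hc, hx⟩)))
      by_cases hbh : b ∈ ρ₂.head
      · -- `b` produced by the head of `ρ₂`: use the resolvent of `r` with `ρ₂`
        have hρQ1 : ρ₂ ∈ Q1 ∧ ρ₂ ≠ r := by
          rcases hρ₂ with h | h
          · exact ⟨h.1, h.2⟩
          · exfalso
            obtain ⟨r', hr', hbr', heq⟩ := h
            rw [heq] at hbh
            rcases Finset.mem_union.mp hbh with h2 | h2
            · exact hbr h2
            · exact Finset.notMem_erase b _ h2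
        have hbρpos : b ∉ ρ₂.bodyPos := fun h => Hnt ρ₂ hρQ1.1 ⟨hbh, h⟩
        have hρsQ2 : (⟨r.head ∪ ρ₂.head.erase b, r.bodyPos.erase b ∪ ρ₂.bodyPos,
            r.bodyNeg ∪ ρ₂.bodyNeg⟩ : Rule Atom) ∈ unfolded Q1 r b :=
          Or.inr ⟨ρ₂, hρQ1.1, hbh, rfl⟩
        set hA : Atom → Finset Atom :=
          fun x => if x ∈ r.bodyPos.erase b then hf x else hf₂' x with hhA
        set nA : Atom → Finset Atom :=
          fun x => if x ∈ r.bodyPos.erase b then bf x else bf₂' x with hnA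
        have hfire := fire_Lft hρsQ2 hA nA ?_
        · refine ⟨_, hfire, ?_, ?_⟩
          · intro x hx
            rcases Finset.mem_union.mp hx with h1 | h1
            · rcases Finset.mem_union.mp h1 with h2 | h2
              · exact Finset.mem_union_left _ (Finset.mem_union_left _ h2)
              · obtain ⟨hxb, hxh⟩ := Finset.mem_erase.mp h2
                exact Finset.mem_union_left _ (Finset.mem_union_right _
                  (Finset.mem_erase.mpr ⟨hxb, Finset.mem_union_left _ hxh⟩))
            · obtain ⟨c, hcmem, hxc⟩ := Finset.mem_biUnion.mp h1
              by_cases hcr : c ∈ r.bodyPos.erase b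
              · simp only [hhA, if_pos hcr] at hxc
                exact Finset.mem_union_right _ (Finset.mem_biUnion.mpr ⟨c, hcr, hxc⟩)
              · simp only [hhA, if_neg hcr] at hxc
                have hcρ : c ∈ ρ₂.bodyPos := by
                  rcases Finset.mem_union.mp hcmem with h3 | h3
                  · exact absurd h3 hcr
                  · exact h3
                exact hslot_head c hcρ hxc
          · intro x hx
            rcases Finset.mem_union.mp hx with h1 | h1
            · rcases Finset.mem_union.mp h1 with h2 | h2
              · exact Finset.mem_union_left _ (Finset.mem_union_left _ h2)
              · exact Finset.mem_union_left _ (Finset.mem_union_right _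
                  (Finset.mem_union_left _ h2))
            · obtain ⟨c, hcmem, hxc⟩ := Finset.mem_biUnion.mp h1
              by_cases hcr : c ∈ r.bodyPos.erase b
              · simp only [hnA, if_pos hcr] at hxc
                exact Finset.mem_union_right _ (Finset.mem_biUnion.mpr ⟨c, hcr, hxc⟩)
              · simp only [hnA, if_neg hcr] at hxc
                have hcρ : c ∈ ρ₂.bodyPos := by
                  rcases Finset.mem_union.mp hcmem with h3 | h3
                  · exact absurd h3 hcr
                  · exact h3
                exact hslot_neg c hcρ hxc
        · intro c hc
          by_cases hcr : c ∈ r.bodyPos.erase b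
          · simp only [hhA, hnA, if_pos hcr]
            exact hside c hcr
          · simp only [hhA, hnA, if_neg hcr]
            have hcρ : c ∈ ρ₂.bodyPos := by
              rcases Finset.mem_union.mp hc with h3 | h3
              · exact absurd h3 hcr
              · exact h3
            exact hslots c hcρ
      · -- `b` only produced inside slots: refire `ρ₂` with the corrected slots
        have hfire := fire_Lft hρ₂ hf₂' bf₂' hslots
        refine ⟨_, hfire, ?_, ?_⟩
        · intro x hx
          rcases Finset.mem_union.mp hx with h1 | h1
          · have hxb : x ≠ b := fun he => hbh (he ▸ h1)
            exact Finset.mem_union_left _ (Finset.mem_union_right _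
              (Finset.mem_erase.mpr ⟨hxb, Finset.mem_union_left _ h1⟩))
          · obtain ⟨c, hc, hxc⟩ := Finset.mem_biUnion.mp h1
            exact hslot_head c hc hxc
        · intro x hx
          rcases Finset.mem_union.mp hx with h1 | h1
          · exact Finset.mem_union_left _ (Finset.mem_union_right _
              (Finset.mem_union_left _ h1))
          · obtain ⟨c, hc, hxc⟩ := Finset.mem_biUnion.mp h1
            exact hslot_neg c hc hxc


lemma unfold_dom_forward {Q1 : Program Atom} {r : Rule Atom} {b : Atom}
    (hr : r ∈ Q1) (hb : b ∈ r.bodyPos)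
    (Hnt : ∀ ρ ∈ Q1, ¬(b ∈ ρ.head ∧ b ∈ ρ.bodyPos)) :
    ∀ C ∈ Lft Q1, ∃ C' ∈ Lft (unfolded Q1 r b), Dom C' C := by
  classical
  have key : ∀ k, ∀ C ∈ (TG Q1)^[k] (∅ : Set (Rule Atom)),
      ∃ C' ∈ Lft (unfolded Q1 r b), Dom C' C := by
    intro k
    induction k with
    | zero => simp
    | succ k IH =>
      rw [iterTG_succ]
      rintro C ⟨ρ, hρ, hf, bf, hfacts, rfl⟩
      by_cases hρr : ρ = r
      · subst hρr
        have IH' : ∀ b' : Atom, ∃ G : Rule Atom, b' ∈ ρ.bodyPos →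
            G ∈ Lft (unfolded Q1 ρ b) ∧ Dom G ⟨insert b' (hf b'), ∅, bf b'⟩ := by
          intro b'
          by_cases h : b' ∈ ρ.bodyPos
          · obtain ⟨G, hG1, hG2⟩ := IH _ (hfacts b' h)
            exact ⟨G, fun _ => ⟨hG1, hG2⟩⟩
          · exact ⟨⟨∅, ∅, ∅⟩, fun h' => absurd h' h⟩
        choose G hG using IH'
        by_cases hex : ∃ b' ∈ ρ.bodyPos, b' ∉ (G b').head
        · obtain ⟨b', hb', hbh⟩ := hex
          obtain ⟨hG1, hGd⟩ := hG b' hb'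
          refine ⟨G b', hG1, ?_, hGd.2.1, ?_⟩
          · intro x hx
            have hx' := hGd.1 hx
            have hxb : x ≠ b' := fun he => hbh (he ▸ hx)
            have : x ∈ hf b' := by
              rcases Finset.mem_insert.mp hx' with h1 | h1
              · exact absurd h1 hxb
              · exact h1
            exact Finset.mem_union_right _ (Finset.mem_biUnion.mpr ⟨b', hb', this⟩)
          · exact fun x hx =>
              Finset.mem_union_right _ (Finset.mem_biUnion.mpr ⟨b', hb', hGd.2.2 hx⟩)
        · push_neg at hex
          have hGpos : ∀ b' ∈ ρ.bodyPos, (G b').bodyPos = ∅ :=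
            fun b' hb' => Lft_bodyPos (hG b' hb').1
          have hside : ∀ b' ∈ ρ.bodyPos.erase b,
              (⟨insert b' ((G b').head.erase b'), ∅, (G b').bodyNeg⟩ : Rule Atom) ∈
                Lft (unfolded Q1 ρ b) := by
            intro b' hb'
            have hb'' := Finset.mem_of_mem_erase hb'
            rw [slot_eq (hGpos b' hb'') (hex b' hb'')]
            exact (hG b' hb'').1
          obtain ⟨k2, hk2⟩ := mem_Lft.mp (hG b hb).1
          obtain ⟨G', hG'mem, hG'h, hG'n⟩ := unfold_pull hr hb Hnt k2 (G b) hk2 (hex b hb)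
            (fun b' => (G b').head.erase b') (fun b' => (G b').bodyNeg) hside
          refine ⟨G', hG'mem, ?_, by simp [Lft_bodyPos hG'mem], ?_⟩
          · intro x hx
            rcases Finset.mem_union.mp (hG'h hx) with h1 | h1
            · rcases Finset.mem_union.mp h1 with h2 | h2
              · exact Finset.mem_union_left _ h2
              · obtain ⟨hxb, hxh⟩ := Finset.mem_erase.mp h2
                have : x ∈ hf b := by
                  rcases Finset.mem_insert.mp ((hG b hb).2.1 hxh) with h3 | h3
                  · exact absurd h3 hxb
                  · exact h3
                exact Finset.mem_union_right _ (Finset.mem_biUnion.mpr ⟨b, hb, this⟩)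
            · obtain ⟨b', hb', hxh⟩ := Finset.mem_biUnion.mp h1
              have hb'' := Finset.mem_of_mem_erase hb'
              have hxb' : x ≠ b' := Finset.ne_of_mem_erase hxh
              have : x ∈ hf b' := by
                rcases Finset.mem_insert.mp
                    ((hG b' hb'').2.1 (Finset.mem_of_mem_erase hxh)) with h3 | h3
                · exact absurd h3 hxb'
                · exact h3
              exact Finset.mem_union_right _ (Finset.mem_biUnion.mpr ⟨b', hb'', this⟩)
          · intro x hx
            rcases Finset.mem_union.mp (hG'n hx) with h1 | h1
            · rcases Finset.mem_union.mp h1 with h2 | h2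
              · exact Finset.mem_union_left _ h2
              · exact Finset.mem_union_right _
                  (Finset.mem_biUnion.mpr ⟨b, hb, (hG b hb).2.2.2 h2⟩)
            · obtain ⟨b', hb', hxh⟩ := Finset.mem_biUnion.mp h1
              have hb'' := Finset.mem_of_mem_erase hb'
              exact Finset.mem_union_right _
                (Finset.mem_biUnion.mpr ⟨b', hb'', (hG b' hb'').2.2.2 hxh⟩)
      · exact sim_rule (show ρ ∈ unfolded Q1 r b from Or.inl ⟨hρ, hρr⟩) hf bf
          (fun b' hb' => IH _ (hfacts b' hb'))
  intro C hC
  obtain ⟨k, hk⟩ := mem_Lft.mp hC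
  exact key k C hk

lemma unfold_dom_backward {Q1 : Program Atom} {r : Rule Atom} {b : Atom}
    (hr : r ∈ Q1) (hb : b ∈ r.bodyPos) :
    ∀ C ∈ Lft (unfolded Q1 r b), ∃ C' ∈ Lft Q1, Dom C' C := by
  classical
  have key : ∀ k, ∀ C ∈ (TG (unfolded Q1 r b))^[k] (∅ : Set (Rule Atom)),
      ∃ C' ∈ Lft Q1, Dom C' C := by
    intro k
    induction k with
    | zero => simp
    | succ k IH =>
      rw [iterTG_succ]
      rintro C ⟨ρ₂, hρ₂, hf₂, bf₂, hfacts, rfl⟩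
      rcases hρ₂ with ⟨hρQ1, _⟩ | ⟨r', hr', hbr', heq⟩
      · exact sim_rule hρQ1 hf₂ bf₂ (fun c hc => IH _ (hfacts c hc))
      · subst heq
        have IH' : ∀ x : Atom, ∃ G : Rule Atom, x ∈ r.bodyPos.erase b ∪ r'.bodyPos →
            G ∈ Lft Q1 ∧ Dom G ⟨insert x (hf₂ x), ∅, bf₂ x⟩ := by
          intro x
          by_cases h : x ∈ r.bodyPos.erase b ∪ r'.bodyPos
          · obtain ⟨G, hG1, hG2⟩ := IH _ (hfacts x h)
            exact ⟨G, fun _ => ⟨hG1, hG2⟩⟩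
          · exact ⟨⟨∅, ∅, ∅⟩, fun h' => absurd h' h⟩
        choose G hG using IH'
        by_cases hex : ∃ x ∈ r.bodyPos.erase b ∪ r'.bodyPos, x ∉ (G x).head
        · obtain ⟨x0, hx0, hxh⟩ := hex
          obtain ⟨hG1, hGd⟩ := hG x0 hx0
          refine ⟨G x0, hG1, ?_, hGd.2.1, ?_⟩
          · intro x hx
            have hx' := hGd.1 hx
            have hxb : x ≠ x0 := fun he => hxh (he ▸ hx)
            have : x ∈ hf₂ x0 := by
              rcases Finset.mem_insert.mp hx' with h1 | h1
              · exact absurd h1 hxb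
              · exact h1
            exact Finset.mem_union_right _ (Finset.mem_biUnion.mpr ⟨x0, hx0, this⟩)
          · exact fun x hx =>
              Finset.mem_union_right _ (Finset.mem_biUnion.mpr ⟨x0, hx0, hGd.2.2 hx⟩)
        · push_neg at hex
          have hGpos : ∀ x ∈ r.bodyPos.erase b ∪ r'.bodyPos, (G x).bodyPos = ∅ :=
            fun x hx => Lft_bodyPos (hG x hx).1
          -- Step 1: fire `r'` to produce a fact containing `b`
          have hF' := fire_Lft hr' (fun c => (G c).head.erase c) (fun c => (G c).bodyNeg)
            (by
              intro c hc
              have hc' : c ∈ r.bodyPos.erase b ∪ r'.bodyPos := Finset.mem_union_right _ hc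
              rw [slot_eq (hGpos c hc') (hex c hc')]
              exact (hG c hc').1)
          set F' : Rule Atom :=
            ⟨r'.head ∪ r'.bodyPos.biUnion (fun c => (G c).head.erase c), ∅,
             r'.bodyNeg ∪ r'.bodyPos.biUnion (fun c => (G c).bodyNeg)⟩ with hF'def
          have hbF' : b ∈ F'.head := Finset.mem_union_left _ hbr'
          -- Step 2: fire `r` using `F'` for the slot `b`
          set hA : Atom → Finset Atom :=
            fun x => if x = b then F'.head.erase b else (G x).head.erase x with hhA
          set nA : Atom → Finset Atom :=
            fun x => if x = b then F'.bodyNeg else (G x).bodyNeg with hnA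
          have hfire := fire_Lft hr hA nA ?_
          · refine ⟨_, hfire, ?_, by simp, ?_⟩
            · intro x hx
              rcases Finset.mem_union.mp hx with h1 | h1
              · exact Finset.mem_union_left _ (Finset.mem_union_left _ h1)
              · obtain ⟨x0, hx0, hxh⟩ := Finset.mem_biUnion.mp h1
                by_cases hx0b : x0 = b
                · rw [hx0b] at hxh
                  simp only [hhA, if_pos rfl] at hxh
                  have hxb : x ≠ b := Finset.ne_of_mem_erase hxh
                  rcases Finset.mem_union.mp (Finset.mem_of_mem_erase hxh) with h2 | h2
                  · exact Finset.mem_union_left _ (Finset.mem_union_right _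
                      (Finset.mem_erase.mpr ⟨hxb, h2⟩))
                  · obtain ⟨c, hc, hxc⟩ := Finset.mem_biUnion.mp h2
                    have hc' : c ∈ r.bodyPos.erase b ∪ r'.bodyPos :=
                      Finset.mem_union_right _ hc
                    have hxc' : x ≠ c := Finset.ne_of_mem_erase hxc
                    have : x ∈ hf₂ c := by
                      rcases Finset.mem_insert.mp
                          ((hG c hc').2.1 (Finset.mem_of_mem_erase hxc)) with h3 | h3
                      · exact absurd h3 hxc'
                      · exact h3
                    exact Finset.mem_union_right _ (Finset.mem_biUnion.mpr ⟨c, hc', this⟩)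
                · simp only [hhA, if_neg hx0b] at hxh
                  have hx0' : x0 ∈ r.bodyPos.erase b ∪ r'.bodyPos :=
                    Finset.mem_union_left _ (Finset.mem_erase.mpr ⟨hx0b, hx0⟩)
                  have hxx0 : x ≠ x0 := Finset.ne_of_mem_erase hxh
                  have : x ∈ hf₂ x0 := by
                    rcases Finset.mem_insert.mp
                        ((hG x0 hx0').2.1 (Finset.mem_of_mem_erase hxh)) with h3 | h3
                    · exact absurd h3 hxx0
                    · exact h3
                  exact Finset.mem_union_right _ (Finset.mem_biUnion.mpr ⟨x0, hx0', this⟩)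
            · intro x hx
              rcases Finset.mem_union.mp hx with h1 | h1
              · exact Finset.mem_union_left _ (Finset.mem_union_left _ h1)
              · obtain ⟨x0, hx0, hxh⟩ := Finset.mem_biUnion.mp h1
                by_cases hx0b : x0 = b
                · rw [hx0b] at hxh
                  simp only [hnA, if_pos rfl] at hxh
                  rcases Finset.mem_union.mp hxh with h2 | h2
                  · exact Finset.mem_union_left _ (Finset.mem_union_right _ h2)
                  · obtain ⟨c, hc, hxc⟩ := Finset.mem_biUnion.mp h2
                    have hc' : c ∈ r.bodyPos.erase b ∪ r'.bodyPos :=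
                      Finset.mem_union_right _ hc
                    exact Finset.mem_union_right _
                      (Finset.mem_biUnion.mpr ⟨c, hc', (hG c hc').2.2.2 hxc⟩)
                · simp only [hnA, if_neg hx0b] at hxh
                  have hx0' : x0 ∈ r.bodyPos.erase b ∪ r'.bodyPos :=
                    Finset.mem_union_left _ (Finset.mem_erase.mpr ⟨hx0b, hx0⟩)
                  exact Finset.mem_union_right _
                    (Finset.mem_biUnion.mpr ⟨x0, hx0', (hG x0 hx0').2.2.2 hxh⟩)
          · intro x hx
            by_cases hxb : x = b
            · subst hxb
              simp only [hhA, hnA, if_pos rfl]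
              rw [slot_eq (by simp [hF'def]) hbF']
              exact hF'
            · simp only [hhA, hnA, if_neg hxb]
              have hx' : x ∈ r.bodyPos.erase b ∪ r'.bodyPos :=
                Finset.mem_union_left _ (Finset.mem_erase.mpr ⟨hxb, hx⟩)
              rw [slot_eq (hGpos x hx') (hex x hx')]
              exact (hG x hx').1
  intro C hC
  obtain ⟨k, hk⟩ := mem_Lft.mp hC
  exact key k C hk


lemma sem_lft_unfold {S : BDSemantics Atom} (hS : Allows S ElimSImpl)
    {Q1 : Program Atom} (hQ1 : IsProgram Q1) {r : Rule Atom} {b : Atom}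
    (hr : r ∈ Q1) (hb : b ∈ r.bodyPos)
    (Hnt : ∀ ρ ∈ Q1, ¬(b ∈ ρ.head ∧ b ∈ ρ.bodyPos)) :
    S.sem (Lft Q1) = S.sem (Lft (unfolded Q1 r b)) :=
  sem_eq_of_mutual_dom hS (Lft_isProgram hQ1)
    (Lft_isProgram (unfolded_isProgram hQ1 hr))
    (unfold_dom_forward hr hb Hnt) (unfold_dom_backward hr hb)

lemma sem_lft_taut {S : BDSemantics Atom} (hS : Allows S ElimSImpl)
    {Q : Program Atom} (hQ : IsProgram Q) {rt : Rule Atom} {b0 : Atom}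
    (hb1 : b0 ∈ rt.head) (hb2 : b0 ∈ rt.bodyPos) :
    S.sem (Lft Q) = S.sem (Lft (Q \ {rt})) :=
  elim_chain hS _ _ _ rfl (Lft_isProgram hQ) (Lft_mono Set.diff_subset)
    (taut_dom hb1 hb2)

/-- Atoms occurring in positive bodies. -/
def PBset (P : Program Atom) : Set Atom := {a | ∃ ρ ∈ P, a ∈ ρ.bodyPos}

lemma phaseB (b : Atom) : ∀ n (P : Program Atom),
    {ρ | ρ ∈ P ∧ b ∈ ρ.head ∧ b ∈ ρ.bodyPos}.ncard = n → IsProgram P →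
    ∃ P', P' ⊆ P ∧ IsProgram P' ∧ (∀ ρ ∈ P', ¬(b ∈ ρ.head ∧ b ∈ ρ.bodyPos)) ∧
      ∀ S : BDSemantics Atom, AllowsStar S →
        S.sem P = S.sem P' ∧ S.sem (Lft P) = S.sem (Lft P') := by
  intro n
  induction n using Nat.strong_induction_on with
  | _ n IHn =>
    intro P hcard hP
    by_cases hex : ∃ ρ ∈ P, b ∈ ρ.head ∧ b ∈ ρ.bodyPos
    · obtain ⟨rt, hrt, hbh, hbp⟩ := hex
      have hP2 : IsProgram (P \ {rt}) := fun ρ hρ => hP ρ hρ.1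
      have hlt : {ρ | ρ ∈ P \ {rt} ∧ b ∈ ρ.head ∧ b ∈ ρ.bodyPos}.ncard < n := by
        have hsub : {ρ | ρ ∈ P \ {rt} ∧ b ∈ ρ.head ∧ b ∈ ρ.bodyPos} =
            {ρ | ρ ∈ P ∧ b ∈ ρ.head ∧ b ∈ ρ.bodyPos} \ {rt} := by
          ext ρ
          simp only [Set.mem_setOf_eq, Set.mem_diff, Set.mem_singleton_iff]
          tauto
        rw [hsub, ← hcard]
        exact Set.ncard_diff_singleton_lt_of_mem ⟨hrt, hbh, hbp⟩ (Set.toFinite _)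
      obtain ⟨P', hsub', hP', htaut, hsem⟩ := IHn _ hlt (P \ {rt}) rfl hP2
      refine ⟨P', hsub'.trans Set.diff_subset, hP', htaut, ?_⟩
      intro S hS
      have htr : ElimTaut P (P \ {rt}) :=
        ⟨rt, hrt, ⟨b, Finset.mem_inter.mpr ⟨hbh, hbp⟩⟩, rfl⟩
      have e1 : S.sem P = S.sem (P \ {rt}) := hS.2.1 P _ hP hP2 htr
      have e2 := sem_lft_taut hS.2.2.1 hP hbh hbp
      exact ⟨e1.trans (hsem S hS).1, e2.trans (hsem S hS).2⟩
    · exact ⟨P, subset_rfl, hP, fun ρ hρ h => hex ⟨ρ, hρ, h⟩,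
        fun S hS => ⟨rfl, rfl⟩⟩

lemma phaseA (b : Atom) : ∀ n (P : Program Atom),
    {ρ | ρ ∈ P ∧ b ∈ ρ.bodyPos}.ncard = n → IsProgram P →
    (∀ ρ ∈ P, ¬(b ∈ ρ.head ∧ b ∈ ρ.bodyPos)) →
    ∃ P', IsProgram P' ∧ (∀ ρ ∈ P', b ∉ ρ.bodyPos) ∧ PBset P' ⊆ PBset P ∧
      ∀ S : BDSemantics Atom, AllowsStar S →
        S.sem P = S.sem P' ∧ S.sem (Lft P) = S.sem (Lft P') := by
  intro n
  induction n using Nat.strong_induction_on with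
  | _ n IHn =>
    intro P hcard hP Hnt
    by_cases hex : ∃ ρ ∈ P, b ∈ ρ.bodyPos
    · obtain ⟨r, hr, hb⟩ := hex
      have hP2 : IsProgram (unfolded P r b) := unfolded_isProgram hP hr
      have hnt2 : ∀ ρ ∈ unfolded P r b, ¬(b ∈ ρ.head ∧ b ∈ ρ.bodyPos) := by
        rintro ρ (hρ | ⟨r', hr', hbr', rfl⟩) h
        · exact Hnt ρ hρ.1 h
        · rcases Finset.mem_union.mp h.1 with h1 | h1
          · exact Hnt r hr ⟨h1, hb⟩
          · exact Finset.notMem_erase b _ h1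
      have hmeas : {ρ | ρ ∈ unfolded P r b ∧ b ∈ ρ.bodyPos} ⊆
          {ρ | ρ ∈ P ∧ b ∈ ρ.bodyPos} \ {r} := by
        rintro ρ ⟨hρ | ⟨r', hr', hbr', rfl⟩, hbρ⟩
        · exact ⟨⟨hρ.1, hbρ⟩, hρ.2⟩
        · exfalso
          rcases Finset.mem_union.mp hbρ with h1 | h1
          · exact Finset.notMem_erase b _ h1
          · exact Hnt r' hr' ⟨hbr', h1⟩
      have hlt : {ρ | ρ ∈ unfolded P r b ∧ b ∈ ρ.bodyPos}.ncard < n := by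
        calc {ρ | ρ ∈ unfolded P r b ∧ b ∈ ρ.bodyPos}.ncard
            ≤ ({ρ | ρ ∈ P ∧ b ∈ ρ.bodyPos} \ {r}).ncard :=
              Set.ncard_le_ncard hmeas (Set.toFinite _)
          _ < {ρ | ρ ∈ P ∧ b ∈ ρ.bodyPos}.ncard :=
              Set.ncard_diff_singleton_lt_of_mem ⟨hr, hb⟩ (Set.toFinite _)
          _ = n := hcard
      have hPB : PBset (unfolded P r b) ⊆ PBset P := by
        rintro a ⟨ρ, hρ | ⟨r', hr', hbr', rfl⟩, ha⟩
        · exact ⟨ρ, hρ.1, ha⟩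
        · rcases Finset.mem_union.mp ha with h1 | h1
          · exact ⟨r, hr, Finset.mem_of_mem_erase h1⟩
          · exact ⟨r', hr', h1⟩
      obtain ⟨P', h1, h2, h3, h4⟩ := IHn _ hlt (unfolded P r b) rfl hP2 hnt2
      refine ⟨P', h1, h2, h3.trans hPB, ?_⟩
      intro S hS
      have e1 : S.sem P = S.sem (unfolded P r b) :=
        hS.1 P _ hP hP2 (unfolding_unfolded hr hb)
      have e2 : S.sem (Lft P) = S.sem (Lft (unfolded P r b)) :=
        sem_lft_unfold hS.2.2.1 hP hr hb Hnt
      exact ⟨e1.trans (h4 S hS).1, e2.trans (h4 S hS).2⟩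
    · exact ⟨P, hP, fun ρ hρ hb => hex ⟨ρ, hρ, hb⟩, subset_rfl,
        fun S hS => ⟨rfl, rfl⟩⟩

lemma main_sem_lft : ∀ n (P : Program Atom), (PBset P).ncard = n → IsProgram P →
    ∀ S : BDSemantics Atom, AllowsStar S → S.sem P = S.sem (Lft P) := by
  intro n
  induction n using Nat.strong_induction_on with
  | _ n IHn =>
    intro P hcard hP S hS
    by_cases hex : ∃ a, a ∈ PBset P
    · obtain ⟨b, hbP⟩ := hex
      obtain ⟨P1, hsub1, hP1, hnt1, hsem1⟩ := phaseB b _ P rfl hP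
      obtain ⟨P2, hP2, hbfree, hPB2, hsem2⟩ := phaseA b _ P1 rfl hP1 hnt1
      have hPB1 : PBset P1 ⊆ PBset P := by
        rintro a ⟨ρ, hρ, ha⟩
        exact ⟨ρ, hsub1 hρ, ha⟩
      have hne : PBset P2 ≠ PBset P := by
        intro he
        obtain ⟨ρ, hρ, hbρ⟩ := he ▸ hbP
        exact hbfree ρ hρ hbρ
      have hlt : (PBset P2).ncard < n := by
        rw [← hcard]
        exact Set.ncard_lt_ncard (((hPB2.trans hPB1)).ssubset_of_ne hne)
          (Set.toFinite _)
      have e3 := IHn _ hlt P2 rfl hP2 S hS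
      calc S.sem P = S.sem P1 := (hsem1 S hS).1
        _ = S.sem P2 := (hsem2 S hS).1
        _ = S.sem (Lft P2) := e3
        _ = S.sem (Lft P1) := ((hsem2 S hS).2).symm
        _ = S.sem (Lft P) := ((hsem1 S hS).2).symm
    · have hneg : ∀ r ∈ P, r.bodyPos = ∅ := by
        intro r hr
        by_contra h
        obtain ⟨a, ha⟩ := Finset.nonempty_iff_ne_empty.mpr h
        exact hex ⟨a, r, hr, ha⟩
      rw [Lft_of_neg hneg]

end Aux7


/-- For any propositional disjunctive logic program `P`,
`D-WFS*(Lft(P)) = D-WFS*(P)`, where `Lft(P)` is the least fixpoint transformation of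
`P` and `D-WFS*` is the weakest BD-semantics allowing all transformations in
`T*_WFS`. -/
theorem dwfsStar_lft_eq
    {Atom : Type} [Fintype Atom] [DecidableEq Atom]
    (P : Program Atom) (hP : IsProgram P) :
    DWFSstar (Lft P) = DWFSstar P := by
  have key : ∀ S ∈ {S : BDSemantics Atom | AllowsStar S},
      S.sem (Lft P) = S.sem P :=
    fun S hS => (main_sem_lft (PBset P).ncard P rfl hP S hS).symm
  exact Set.iInter₂_congr key

end DLP
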